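/- arXiv:1312.0377 — 2 statements merged into one kernel-verified Lean document; each statement's English description precedes it below -/
import Mathlib

section
/- Let p ≥ 3 and ℓ ≥ 2 be integers with pℓ ≥ 6, and let f(x) = x³ - ℓx + pℓ/(pℓ+1)⁴ ∈ ℝ[x]. Then every complex root w of f satisfies min(|w|, |w - √ℓ|, |w + √ℓ|) < 1/(pℓ+1), each of the three open discs of radius 1/(pℓ+1) centered at 0, √ℓ, -√ℓ contains exactly one root of f, and all three roots of f are real. -/
/-!
Put `s = √ℓ`, `r = 1/(pℓ+1)` and `ε = pℓ/(pℓ+1)⁴ < r³`, so that `f = x(x - s)(x + s) + ε`.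
As `s > 2r`, `f` changes sign across each interval `(t - r, t + r)` with `t ∈ {0, s, -s}`, and the
intermediate value theorem gives a real root in each. These intervals are disjoint, so the three
real roots are distinct and, `f` being a cubic, they are all of its complex roots. The centres are
`2r` apart, hence every disc of radius `r` around a centre contains exactly one of them.
-/

open Polynomial Metric Function Set

section Separated

variable {ι X : Type*} [PseudoMetricSpace X] {x u : ι → X} {r : ℝ}

theorem eq_of_dist_lt_of_separated (hx : ∀ i, dist (x i) (u i) < r)
    (hu : Pairwise fun i j => 2 * r ≤ dist (u i) (u j)) {i j : ι} (hij : dist (x i) (u j) < r) :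
    i = j := by
  by_contra hne
  linarith [hu hne, hx i, dist_comm (u i) (x i), dist_triangle (u i) (x i) (u j)]

theorem injective_of_separated (hx : ∀ i, dist (x i) (u i) < r)
    (hu : Pairwise fun i j => 2 * r ≤ dist (u i) (u j)) : Injective x := fun _ j hij =>
  eq_of_dist_lt_of_separated hx hu (hij ▸ hx j)

theorem existsUnique_mem_range_dist_lt_of_separated (hx : ∀ i, dist (x i) (u i) < r)
    (hu : Pairwise fun i j => 2 * r ≤ dist (u i) (u j)) (j : ι) :
    ∃! w, w ∈ range x ∧ dist w (u j) < r :=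
  ⟨x j, ⟨mem_range_self j, hx j⟩, by
    rintro _ ⟨⟨i, rfl⟩, hi⟩
    rw [eq_of_dist_lt_of_separated hx hu hi]⟩

end Separated

theorem Polynomial.mem_range_of_isRoot {R ι : Type*} [CommRing R] [IsDomain R] [Fintype ι]
    {g : R[X]} (hg : g ≠ 0) (hdeg : g.natDegree ≤ Fintype.card ι) {x : ι → R}
    (hinj : Injective x) (hx : ∀ i, g.IsRoot (x i)) {w : R} (hw : g.IsRoot w) :
    w ∈ range x := by
  classical
  by_contra hw'
  have hsub : (insert w (Finset.univ.image x)).val ⊆ g.roots := by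
    intro z hz
    rw [mem_roots hg]
    rcases Finset.mem_insert.1 hz with rfl | hz
    · exact hw
    · obtain ⟨i, -, rfl⟩ := Finset.mem_image.1 hz
      exact hx i
  have hcard := card_le_degree_of_subset_roots hsub
  rw [Finset.card_insert_of_notMem (by simpa using hw'), Finset.card_image_of_injective _ hinj,
    Finset.card_univ] at hcard
  omega

theorem exists_mem_ball_eq_zero_of_mul_neg {f : ℝ → ℝ} (hf : Continuous f) {t r : ℝ}
    (hr : 0 ≤ r) (h : f (t - r) * f (t + r) < 0) : ∃ x ∈ ball t r, f x = 0 := by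
  have htr : t - r ≤ t + r := by linarith
  rw [Real.ball_eq_Ioo]
  rcases mul_neg_iff.1 h with ⟨h₁, h₂⟩ | ⟨h₁, h₂⟩
  · exact intermediate_value_Ioo' htr hf.continuousOn ⟨h₂, h₁⟩
  · exact intermediate_value_Ioo htr hf.continuousOn ⟨h₁, h₂⟩

theorem exists_mem_ball_cube_sub_sq_mul_add_eq_zero {s r ε : ℝ} (hr : 0 < r) (hrs : 2 * r < s)
    (hε : 0 < ε) (hεr : ε ≤ r ^ 3) :
    ∀ t ∈ ({0, s, -s} : Set ℝ), ∃ x ∈ ball t r, x ^ 3 - s ^ 2 * x + ε = 0 := by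
  have hcont : Continuous fun x : ℝ => x ^ 3 - s ^ 2 * x + ε := by fun_prop
  have hsr : r < s - r := by linarith
  -- at the six endpoints the cubic equals `ε ± r(s - r)(s + r)`, `ε ± r(s - r)(2s - r)` or
  -- `ε ± r(s + r)(2s + r)`
  have h₀ : r ^ 3 < r * ((s - r) * (s + r)) := by
    rw [pow_succ']; exact mul_lt_mul_of_pos_left (by nlinarith) hr
  have h₁ : r ^ 3 < r * ((s - r) * (2 * s - r)) := by
    rw [pow_succ']; exact mul_lt_mul_of_pos_left (by nlinarith) hr
  have h₂ : r ^ 3 < r * ((s + r) * (2 * s + r)) := by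
    rw [pow_succ']; exact mul_lt_mul_of_pos_left (by nlinarith) hr
  rintro t (rfl | rfl | rfl) <;> refine exists_mem_ball_eq_zero_of_mul_neg hcont hr.le ?_
  · exact mul_neg_of_pos_of_neg (by linarith) (by linarith)
  · exact mul_neg_of_neg_of_pos (by linarith) (by linarith)
  · exact mul_neg_of_neg_of_pos (by linarith) (by linarith)

theorem pairwise_two_mul_le_dist_zero_ofReal_neg {s r : ℝ} (hrs : 2 * r ≤ s) :
    Pairwise fun i j => 2 * r ≤ dist (![0, (s : ℂ), -s] i) (![0, (s : ℂ), -s] j) := by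
  have hu : ![0, (s : ℂ), -s] = fun i => ((![0, s, -s] i : ℝ) : ℂ) := by
    ext i; fin_cases i <;> simp
  have h₂ : |s + s| = 2 * |s| := by rw [← two_mul, abs_mul, abs_two]
  have h₂' : |-s - s| = 2 * |s| := by rw [← neg_add', abs_neg, h₂]
  intro i j hij
  rw [hu, Complex.isometry_ofReal.dist_eq, Real.dist_eq]
  fin_cases i <;> fin_cases j <;> simp at hij ⊢
  all_goals linarith [le_abs_self s, abs_nonneg s]

theorem exists_real_roots_cube_sub_sq_mul_add {s r ε : ℝ} (hr : 0 < r) (hrs : 2 * r < s)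
    (hε : 0 < ε) (hεr : ε ≤ r ^ 3) :
    ∃ x : Fin 3 → ℝ, (∀ i, dist (x i : ℂ) (![0, (s : ℂ), -s] i) < r) ∧
      ∀ w : ℂ, aeval w (X ^ 3 - C (s ^ 2) * X + C ε) = 0 ↔ w ∈ range fun i => (x i : ℂ) := by
  choose x hx hfx using fun i => exists_mem_ball_cube_sub_sq_mul_add_eq_zero hr hrs hε hεr
    (![0, s, -s] i) (by fin_cases i <;> simp)
  have hxC : ∀ i, dist (x i : ℂ) (![0, (s : ℂ), -s] i) < r := by
    intro i
    have hu : ((![0, s, -s] i : ℝ) : ℂ) = ![0, (s : ℂ), -s] i := by fin_cases i <;> simp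
    rw [← hu, Complex.isometry_ofReal.dist_eq]
    exact hx i
  have hroot : ∀ i, aeval (x i : ℂ) (X ^ 3 - C (s ^ 2) * X + C ε) = 0 := by
    intro i
    rw [← Complex.coe_algebraMap, aeval_algebraMap_apply]
    simp [hfx i]
  have hmonic : (X ^ 3 - C (s ^ 2) * X + C ε : ℝ[X]).Monic := by monicity!
  have hdeg : (X ^ 3 - C (s ^ 2) * X + C ε : ℝ[X]).natDegree = 3 := by compute_degree!
  refine ⟨x, hxC, fun w => ⟨fun hw => ?_, by rintro ⟨i, rfl⟩; exact hroot i⟩⟩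
  refine mem_range_of_isRoot (hmonic.map (algebraMap ℝ ℂ)).ne_zero
    (by rw [natDegree_map, hdeg, Fintype.card_fin])
    (injective_of_separated hxC (pairwise_two_mul_le_dist_zero_ofReal_neg hrs.le))
    (fun i => ?_) (by rwa [IsRoot, eval_map_algebraMap])
  rw [IsRoot, eval_map_algebraMap, hroot i]

theorem div_add_one_pow_four_le_one_div_pow_three {n : ℝ} (hn : 0 ≤ n) :
    n / (n + 1) ^ 4 ≤ (1 / (n + 1)) ^ 3 := by
  rw [div_pow, one_pow, div_le_div_iff₀ (by positivity) (by positivity)]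
  nlinarith [pow_pos (by linarith : 0 < n + 1) 3]

theorem stmt7_general (p ℓ : ℕ) (hpl : 6 ≤ p * ℓ)
    (f : ℝ[X])
    (hf : f = X ^ 3 - C (ℓ : ℝ) * X + C ((p * ℓ : ℝ) / (p * ℓ + 1) ^ 4)) :
    (∀ w : ℂ, Polynomial.aeval w f = 0 →
      min (min ‖w‖ ‖w - ((Real.sqrt ℓ : ℝ) : ℂ)‖)
          ‖w + ((Real.sqrt ℓ : ℝ) : ℂ)‖
        < 1 / (p * ℓ + 1)) ∧
    (∀ c ∈ ({0, ((Real.sqrt ℓ : ℝ) : ℂ), -((Real.sqrt ℓ : ℝ) : ℂ)} : Set ℂ),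
      ∃! w : ℂ, Polynomial.aeval w f = 0 ∧ ‖w - c‖ < 1 / (p * ℓ + 1)) ∧
    (∀ w : ℂ, Polynomial.aeval w f = 0 → w.im = 0) := by
  have hpl' : (6 : ℝ) ≤ p * ℓ := by exact_mod_cast hpl
  have hℓ : (1 : ℝ) ≤ ℓ := by exact_mod_cast Nat.pos_of_ne_zero (by rintro rfl; simp at hpl)
  set s := √(ℓ : ℝ)
  set r : ℝ := 1 / (p * ℓ + 1)
  have hrs : 2 * r < s := by
    have : r ≤ 1 / 7 := one_div_le_one_div_of_le (by norm_num) (by linarith)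
    linarith [Real.one_le_sqrt.2 hℓ]
  have hC : C (ℓ : ℝ) = C (s ^ 2) := by rw [Real.sq_sqrt (Nat.cast_nonneg ℓ)]
  rw [hC] at hf
  subst hf
  obtain ⟨x, hx, hroot⟩ := exists_real_roots_cube_sub_sq_mul_add (by positivity) hrs
    (div_pos (by linarith) (by positivity)) (div_add_one_pow_four_le_one_div_pow_three (by positivity))
  refine ⟨fun w hw => ?_, fun c hc => ?_, fun w hw => ?_⟩
  · obtain ⟨i, rfl⟩ := (hroot w).1 hw
    calc _ ≤ dist (x i : ℂ) (![0, (s : ℂ), -s] i) := by fin_cases i <;> simp [dist_eq_norm]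
      _ < r := hx i
  · obtain ⟨j, rfl⟩ : ∃ j, ![0, (s : ℂ), -s] j = c := by
      rcases hc with rfl | rfl | rfl
      exacts [⟨0, rfl⟩, ⟨1, rfl⟩, ⟨2, rfl⟩]
    simpa only [hroot, dist_eq_norm] using existsUnique_mem_range_dist_lt_of_separated hx
      (pairwise_two_mul_le_dist_zero_ofReal_neg hrs.le) j
  · obtain ⟨i, rfl⟩ := (hroot w).1 hw
    exact Complex.ofReal_im _

open Polynomial in
theorem stmt7 (p ℓ : ℕ) (hp : 3 ≤ p) (hl : 2 ≤ ℓ) (hpl : 6 ≤ p * ℓ)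
    (f : ℝ[X])
    (hf : f = X ^ 3 - C (ℓ : ℝ) * X + C ((p * ℓ : ℝ) / (p * ℓ + 1) ^ 4)) :
    (∀ w : ℂ, Polynomial.aeval w f = 0 →
      min (min ‖w‖ ‖w - ((Real.sqrt ℓ : ℝ) : ℂ)‖)
          ‖w + ((Real.sqrt ℓ : ℝ) : ℂ)‖
        < 1 / (p * ℓ + 1)) ∧
    (∀ c ∈ ({0, ((Real.sqrt ℓ : ℝ) : ℂ), -((Real.sqrt ℓ : ℝ) : ℂ)} : Set ℂ),
      ∃! w : ℂ, Polynomial.aeval w f = 0 ∧ ‖w - c‖ < 1 / (p * ℓ + 1)) ∧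
    (∀ w : ℂ, Polynomial.aeval w f = 0 → w.im = 0) :=
  stmt7_general p ℓ hpl f hf
end

section
/- Let Γ be the subgroup of ℂ* generated by a finite set R of complex numbers of absolute value √q (q > 0 real, q ∈ Γ), and let Γ' be the subgroup generated by {q⁻¹α² : α ∈ R}. Then Γ' together with q generates a finite-index subgroup of Γ, and rank(Γ) = rank(Γ') + 1. -/
open scoped TensorProduct

/-- The (free) rank of a commutative group: the dimension of `ℚ ⊗ℤ G`. -/
noncomputable def grpRank (G : Type*) [CommGroup G] : ℕ :=
  Module.finrank ℚ (ℚ ⊗[ℤ] (Additive G))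

/-! The subgroup `H = Γ' ⊔ ⟨q⟩` contains `α ^ 2 = q · (q⁻¹ α ^ 2)` for every generator `α`, so it
contains all squares of `Γ`: hence `Γ / H` is a finitely generated group of exponent 2, thus
finite, and squaring and inclusion make `ℚ ⊗ H ≅ ℚ ⊗ Γ`. Every element of `Γ'` has absolute
value 1 while `|q ^ n| = q ^ n ≠ 1` for `n ≠ 0`, so `H ≅ Γ' × ℤ`, giving the extra 1 in the rank. -/

lemma LinearMap.baseChange_rat_comp_eq_smul {M N : Type*} [AddCommGroup M] [AddCommGroup N]
    {f : M →ₗ[ℤ] N} {g : N →ₗ[ℤ] M} {n : ℤ} (hgf : g ∘ₗ f = n • LinearMap.id) :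
    g.baseChange ℚ ∘ₗ f.baseChange ℚ = (n : ℚ) • LinearMap.id := by
  rw [← LinearMap.baseChange_comp, hgf, LinearMap.baseChange_smul, LinearMap.baseChange_id]
  exact LinearMap.ext fun x => (Int.cast_smul_eq_zsmul ℚ n x).symm

lemma finrank_baseChange_rat_eq_of_comp_eq_smul {M N : Type*} [AddCommGroup M] [AddCommGroup N]
    (f : M →ₗ[ℤ] N) (g : N →ₗ[ℤ] M) {n : ℤ} (hn : n ≠ 0)
    (hgf : g ∘ₗ f = n • LinearMap.id) (hfg : f ∘ₗ g = n • LinearMap.id) :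
    Module.finrank ℚ (ℚ ⊗[ℤ] M) = Module.finrank ℚ (ℚ ⊗[ℤ] N) := by
  have hn' : (n : ℚ) ≠ 0 := Int.cast_ne_zero.mpr hn
  refine (LinearEquiv.ofLinearMap (f.baseChange ℚ) ((n : ℚ)⁻¹ • g.baseChange ℚ) ?_ ?_).finrank_eq
  · rw [LinearMap.comp_smul, LinearMap.baseChange_rat_comp_eq_smul hfg, smul_smul,
      inv_mul_cancel₀ hn', one_smul]
  · rw [LinearMap.smul_comp, LinearMap.baseChange_rat_comp_eq_smul hgf, smul_smul,
      inv_mul_cancel₀ hn', one_smul]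

section grpRank

variable {G H : Type*} [CommGroup G] [CommGroup H]

lemma grpRank_congr (e : G ≃* H) : grpRank G = grpRank H :=
  (e.toAdditive.toIntLinearEquiv.baseChange ℤ ℚ _ _).finrank_eq

lemma grpRank_prod [Group.FG G] [Group.FG H] : grpRank (G × H) = grpRank G + grpRank H := by
  rw [grpRank, grpRank, grpRank, ← Module.finrank_prod,
    ((AddEquiv.prodAdditive G H).toIntLinearEquiv.baseChange ℤ ℚ _ _ |>.trans
      (TensorProduct.prodRight ℤ ℚ ℚ _ _)).finrank_eq]

lemma grpRank_multiplicative_int : grpRank (Multiplicative ℤ) = 1 := by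
  rw [grpRank, ← Module.finrank_self ℚ]
  exact ((AddEquiv.additiveMultiplicative ℤ).toIntLinearEquiv.baseChange ℤ ℚ _ _ |>.trans
    (TensorProduct.AlgebraTensorModule.rid ℤ ℚ ℚ)).finrank_eq

lemma grpRank_eq_of_comp_eq_pow (f : G →* H) (g : H →* G) {n : ℕ} (hn : n ≠ 0)
    (hgf : ∀ a, g (f a) = a ^ n) (hfg : ∀ b, f (g b) = b ^ n) : grpRank G = grpRank H :=
  finrank_baseChange_rat_eq_of_comp_eq_smul f.toAdditive.toIntLinearMap
    g.toAdditive.toIntLinearMap (n := n) (Int.natCast_ne_zero.mpr hn)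
    (LinearMap.ext fun a => by simp [hgf]) (LinearMap.ext fun b => by simp [hfg])

end grpRank

namespace Subgroup

variable {G : Type*} [CommGroup G]

lemma grpRank_eq_of_pow_mem {H K : Subgroup G} (hHK : H ≤ K) {n : ℕ} (hn : n ≠ 0)
    (hpow : K ≤ H.comap (powMonoidHom n)) : grpRank H = grpRank K :=
  grpRank_eq_of_comp_eq_pow (inclusion hHK)
    ((powMonoidHom n).comp K.subtype |>.codRestrict H fun g => hpow g.2) hn
    (fun _ => rfl) (fun _ => rfl)

lemma relIndex_ne_zero_of_pow_mem {H K : Subgroup G} [Group.FG K] {n : ℕ} (hn : n ≠ 0)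
    (hpow : K ≤ H.comap (powMonoidHom n)) : H.relIndex K ≠ 0 := by
  have htorsion : IsMulTorsion (K ⧸ H.subgroupOf K) := by
    intro x
    induction x using QuotientGroup.induction_on with
    | H g =>
      refine isOfFinOrder_iff_pow_eq_one.mpr ⟨n, Nat.pos_of_ne_zero hn, ?_⟩
      rw [← QuotientGroup.mk_pow, QuotientGroup.eq_one_iff, mem_subgroupOf]
      exact hpow g.2
  have : Finite (K ⧸ H.subgroupOf K) := CommGroup.finite_of_fg_isMulTorsion _ htorsion
  exact index_ne_zero_of_finite

noncomputable def prodMultiplicativeIntEquivSupZPowers {A : Subgroup G} {x : G}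
    (hx : ∀ n : ℤ, x ^ n ∈ A → n = 0) : A × Multiplicative ℤ ≃* ↥(A ⊔ zpowers x) :=
  let φ : A × Multiplicative ℤ →* G :=
    A.subtype.comp (MonoidHom.fst _ _) * (zpowersHom G x).comp (MonoidHom.snd _ _)
  have hφ : Function.Injective φ := by
    rw [injective_iff_map_eq_one]
    rintro ⟨a, n⟩ h
    have hn : n.toAdd = 0 := hx _ <| by
      rw [show x ^ n.toAdd = (a : G)⁻¹ from eq_inv_of_mul_eq_one_right h]
      exact inv_mem a.2
    obtain rfl : n = 1 := congrArg Multiplicative.ofAdd hn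
    have ha : (a : G) = 1 := by simpa [φ] using h
    exact Prod.ext (Subtype.ext ha) rfl
  have hrange : φ.range = A ⊔ zpowers x := by
    ext g
    simp only [MonoidHom.mem_range, mem_sup, mem_zpowers_iff]
    constructor
    · rintro ⟨⟨a, n⟩, rfl⟩
      exact ⟨a, a.2, _, ⟨n.toAdd, rfl⟩, rfl⟩
    · rintro ⟨a, ha, _, ⟨n, rfl⟩, rfl⟩
      exact ⟨(⟨a, ha⟩, Multiplicative.ofAdd n), rfl⟩
  (MonoidHom.ofInjective hφ).trans (MulEquiv.subgroupCongr hrange)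

lemma grpRank_sup_zpowers {A : Subgroup G} [Group.FG A] {x : G}
    (hx : ∀ n : ℤ, x ^ n ∈ A → n = 0) : grpRank ↥(A ⊔ zpowers x) = grpRank A + 1 := by
  rw [← grpRank_congr (prodMultiplicativeIntEquivSupZPowers hx), grpRank_prod,
    grpRank_multiplicative_int]

end Subgroup

lemma Units.eq_zero_of_zpow_mem_closure_of_norm_eq_one {S : Set ℂˣ} (hS : ∀ s ∈ S, ‖(s : ℂ)‖ = 1) {x : ℂˣ}
    (hx : ‖(x : ℂ)‖ ≠ 1) (n : ℤ) (hn : x ^ n ∈ Subgroup.closure S) : n = 0 := by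
  let normUnits : ℂˣ →* ℝ := (normHom : ℂ →*₀ ℝ).toMonoidHom.comp (Units.coeHom ℂ)
  have hker : Subgroup.closure S ≤ normUnits.ker :=
    Subgroup.closure_le _ |>.mpr hS
  have hnorm : normUnits x ^ n = 1 := map_zpow normUnits x n ▸ hker hn
  exact (zpow_eq_one_iff_right₀ (norm_nonneg _) hx).mp hnorm

theorem stmt10 (q : ℝ) (hq : 1 < q) (qu : ℂˣ) (hqu : (qu : ℂ) = (q : ℂ))
    (R : Finset ℂˣ) (habs : ∀ α ∈ R, ‖(α : ℂ)‖ = Real.sqrt q)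
    (hqΓ : qu ∈ Subgroup.closure (R : Set ℂˣ)) :
    (Subgroup.closure ((fun α : ℂˣ => qu⁻¹ * α ^ 2) '' (R : Set ℂˣ))
        ⊔ Subgroup.closure {qu}).relIndex (Subgroup.closure (R : Set ℂˣ)) ≠ 0 ∧
    grpRank (Subgroup.closure (R : Set ℂˣ)) =
      grpRank (Subgroup.closure ((fun α : ℂˣ => qu⁻¹ * α ^ 2) '' (R : Set ℂˣ))) + 1 := by
  rw [← Subgroup.zpowers_eq_closure]
  set Γ := Subgroup.closure (R : Set ℂˣ)
  set Γ' := Subgroup.closure ((fun α : ℂˣ => qu⁻¹ * α ^ 2) '' (R : Set ℂˣ))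
  set H := Γ' ⊔ Subgroup.zpowers qu
  have hHΓ : H ≤ Γ := by
    refine sup_le (Subgroup.closure_le _ |>.mpr ?_) (Subgroup.zpowers_le.mpr hqΓ)
    rintro _ ⟨α, hα, rfl⟩
    exact mul_mem (inv_mem hqΓ) (pow_mem (Subgroup.subset_closure hα) 2)
  have hsq : Γ ≤ H.comap (powMonoidHom 2) := by
    refine Subgroup.closure_le _ |>.mpr fun α hα => ?_
    rw [SetLike.mem_coe, Subgroup.mem_comap, powMonoidHom_apply,
      ← mul_inv_cancel_left qu (α ^ 2)]
    exact mul_mem (Subgroup.mem_sup_right (Subgroup.mem_zpowers qu))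
      (Subgroup.mem_sup_left (Subgroup.subset_closure ⟨α, hα, rfl⟩))
  have hnorm_qu : ‖(qu : ℂ)‖ = q := by
    rw [hqu, Complex.norm_real, Real.norm_of_nonneg (by linarith)]
  have hfree : ∀ n : ℤ, qu ^ n ∈ Γ' → n = 0 := by
    refine Units.eq_zero_of_zpow_mem_closure_of_norm_eq_one ?_ (hnorm_qu ▸ hq.ne')
    rintro _ ⟨α, hα, rfl⟩
    rw [Units.val_mul, Units.val_pow_eq_pow_val, Units.val_inv_eq_inv_val, norm_mul, norm_inv,
      norm_pow, hnorm_qu, habs α hα, Real.sq_sqrt (by linarith), inv_mul_cancel₀ (by linarith)]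
  refine ⟨Subgroup.relIndex_ne_zero_of_pow_mem two_ne_zero hsq, ?_⟩
  rw [← Subgroup.grpRank_eq_of_pow_mem hHΓ two_ne_zero hsq,
    Subgroup.grpRank_sup_zpowers hfree]
end
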